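/- There exists M such that for every x ∈ ℤ² with |x| ≥ M and every killing rate κ > 0, Σ_{n=|x|}^{⌊|x|²/(2 log |x|)⌋} (4+κ)^{−n} W_n^{o,x} ≤ 3/|x|. -/

import Mathlib

/-!
Rotating `ℤ²` by 45°, a nearest-neighbour walk becomes a pair of `±1` walks on `ℤ` ending at
`x₁ + x₂` and `x₁ - x₂`. The ratio `C(n, m+1) / C(n, m) = (n - m) / (m + 1)` is at most
`exp (-2 (2m + 1 - n) / (n + 1))`, which telescopes to a Gaussian bound on the number of `±1` walks;
together with `(x₁ + x₂)² + (x₁ - x₂)² ≥ |x|²` and `C(n, ⌊n/2⌋)² ≤ 2 · 4ⁿ / (3n)` this gives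
`W_n^{o,x} ≤ (2e/3) · 4ⁿ · e^{-|x|²/(2n)} / n`. The function `n ↦ e^{-|x|²/(2n)} / n` increases
up to `|x|²/2`, so each of the at most `N = ⌊|x|² / (2 log |x|)⌋` terms of the sum is at most
`(2e/3) e^{-log |x|} / N`, and the sum is at most `(2e/3) / |x| ≤ 3 / |x|`.
-/

open scoped Real

/-- Graph (L¹) distance of `x ∈ ℤ²` from the origin: `|x₁| + |x₂|`. -/
def gnorm (x : ℤ × ℤ) : ℕ := x.1.natAbs + x.2.natAbs

/-- `W n x` is the number of nearest-neighbour walks of length `n` in `ℤ²`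
from the origin `o = (0,0)` to `x`, i.e. the number of sequences
`(v₀, …, v_n)` with `v₀ = o`, `v_n = x` and `|v_{i+1} − v_i| = 1` for all `i`. -/
noncomputable def W (n : ℕ) (x : ℤ × ℤ) : ℕ :=
  Set.ncard {v : Fin (n + 1) → ℤ × ℤ |
    v 0 = (0, 0) ∧ v (Fin.last n) = x ∧
    ∀ i : Fin n, gnorm (v i.succ - v i.castSucc) = 1}

/-- The Green's function `G^{o,x}` of the simple random walk on `ℤ²` with
killing rate `κ`: `G κ x = Σ_{n≥0} (4+κ)^{-n} W_n^{o,x}`. -/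
noncomputable def G (κ : ℝ) (x : ℤ × ℤ) : ℝ :=
  ∑' n : ℕ, (1 / (4 + κ)) ^ n * (W n x : ℝ)

open Finset Real

lemma div_le_exp_neg_two_mul_sub_div_add {x y : ℝ} (hy : 0 < y) (hyx : y ≤ x) :
    y / x ≤ exp (-(2 * (x - y) / (x + y))) := by
  have hlog := le_log_one_add_of_nonneg (div_nonneg (sub_nonneg.2 hyx) hy.le)
  rw [one_add_div hy.ne', add_sub_cancel,
    show 2 * ((x - y) / y) / ((x - y) / y + 2) = 2 * (x - y) / (x + y) by field_simp; ring] at hlog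
  calc y / x = exp (-log (x / y)) := by
        rw [exp_neg, exp_log (div_pos (hy.trans_le hyx) hy), inv_div]
    _ ≤ exp (-(2 * (x - y) / (x + y))) := exp_le_exp.2 (neg_le_neg hlog)

lemma exp_neg_div_div_le_of_le {c x y : ℝ} (hx : 0 < x) (hxy : x ≤ y) (hyc : y ≤ c) :
    exp (-(c / x)) / x ≤ exp (-(c / y)) / y := by
  have hy : 0 < y := hx.trans_le hxy
  have hexp : y / x ≤ exp (c / x - c / y) := by
    calc y / x ≤ exp (y / x - 1) := by
          simpa using add_one_le_exp (y / x - 1)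
      _ ≤ exp (c / x - c / y) := by
          refine exp_le_exp.2 ?_
          rw [div_sub_one hx.ne', div_sub_div _ _ hx.ne' hy.ne', div_le_div_iff₀ hx (by positivity)]
          nlinarith [mul_le_mul_of_nonneg_left hyc (sub_nonneg.2 hxy)]
  rw [div_le_div_iff₀ hx hy]
  calc exp (-(c / x)) * y = exp (-(c / x)) * x * (y / x) := by field_simp
    _ ≤ exp (-(c / x)) * x * exp (c / x - c / y) := by gcongr
    _ = exp (-(c / y)) * x := by rw [mul_right_comm, ← exp_add]; ring_nf

lemma choose_le_choose_mul_exp {n m₀ m : ℕ} (h₀ : n ≤ 2 * m₀ + 1) (hm : m₀ ≤ m) :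
    (n.choose m : ℝ) ≤
      n.choose m₀ * exp (((2 * m₀ - n : ℝ) ^ 2 - (2 * m - n : ℝ) ^ 2) / (2 * (n + 1))) := by
  induction m, hm using Nat.le_induction with
  | base => simp
  | succ m hm ih =>
    rcases lt_or_ge m n with hmn | hmn
    · have hnm : (0 : ℝ) < n - m := by simp [hmn]
      have hratio : (n.choose (m + 1) : ℝ) = n.choose m * ((n - m) / (m + 1)) := by
        rw [← Nat.cast_sub hmn.le, mul_div_assoc', eq_div_iff (by positivity)]
        exact_mod_cast Nat.choose_succ_right_eq n m
      have hstep := div_le_exp_neg_two_mul_sub_div_add (x := m + 1) hnm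
        (by have : (n : ℝ) ≤ 2 * m + 1 := by exact_mod_cast (by omega : n ≤ 2 * m + 1)
            linarith)
      calc (n.choose (m + 1) : ℝ) = n.choose m * ((n - m) / (m + 1)) := hratio
        _ ≤ n.choose m₀ * exp (((2 * m₀ - n : ℝ) ^ 2 - (2 * m - n : ℝ) ^ 2) / (2 * (n + 1))) *
              exp (-(2 * ((m + 1) - (n - m)) / ((m + 1) + (n - m)))) := by gcongr
        _ = _ := by
          rw [mul_assoc, ← exp_add, show (m + 1 + (n - m) : ℝ) = n + 1 by ring]
          congr 2; push_cast; field_simp; ring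
    · rw [Nat.choose_eq_zero_of_lt (by omega)]; push_cast; positivity

lemma choose_le_choose_half_mul_exp {n : ℕ} (hn : 0 < n) (m : ℕ) :
    (n.choose m : ℝ) ≤ n.choose (n / 2) * exp (1 / 2 - (2 * m - n : ℝ) ^ 2 / (2 * n)) := by
  wlog hm : n / 2 ≤ m generalizing m
  · have := this (n - m) (by omega)
    rwa [Nat.choose_symm (by omega), Nat.cast_sub (by omega),
      show (2 * (n - m : ℝ) - n) ^ 2 = (2 * m - n) ^ 2 by ring] at this
  rcases le_or_gt m n with hmn | hmn
  · refine (choose_le_choose_mul_exp (by omega) hm).trans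
      (mul_le_mul_of_nonneg_left (exp_le_exp.2 ?_) (by positivity))
    have hs : (2 * (n / 2 : ℕ) - n : ℝ) ^ 2 ≤ 1 := by
      rcases Nat.even_or_odd' n with ⟨k, rfl | rfl⟩ <;>
        norm_num [Nat.mul_div_cancel_left, show (2 * k + 1) / 2 = k by omega]
    have hnR : (0 : ℝ) < n := by exact_mod_cast hn
    have hmR : (m : ℝ) ≤ n := by exact_mod_cast hmn
    have hd : (2 * m - n : ℝ) ^ 2 / n ≤ n := by
      rw [div_le_iff₀ hnR, ← sq]
      exact sq_le_sq' (by linarith [m.cast_nonneg (α := ℝ)]) (by linarith)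
    rw [div_le_iff₀ (by positivity), show (1 / 2 - (2 * m - n : ℝ) ^ 2 / (2 * n)) * (2 * (n + 1))
      = n + 1 - (2 * m - n) ^ 2 - (2 * m - n) ^ 2 / n by field_simp; ring]
    linarith
  · rw [Nat.choose_eq_zero_of_lt hmn]; push_cast; positivity

lemma centralBinom_sq_mul_le (m : ℕ) : m.centralBinom ^ 2 * (3 * m + 1) ≤ 16 ^ m := by
  induction m with
  | zero => simp
  | succ m ih =>
    refine Nat.le_of_mul_le_mul_left ?_ (by positivity : 0 < (m + 1) ^ 2 * (3 * m + 1))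
    calc (m + 1) ^ 2 * (3 * m + 1) * ((m + 1).centralBinom ^ 2 * (3 * (m + 1) + 1))
        = ((m + 1) * (m + 1).centralBinom) ^ 2 * ((3 * m + 1) * (3 * m + 4)) := by ring
      _ = (4 * (2 * m + 1) ^ 2 * (3 * m + 4)) * (m.centralBinom ^ 2 * (3 * m + 1)) := by
          rw [Nat.succ_mul_centralBinom_succ]; ring
      _ ≤ (4 * (2 * m + 1) ^ 2 * (3 * m + 4)) * 16 ^ m := Nat.mul_le_mul_left _ ih
      _ ≤ ((m + 1) ^ 2 * (3 * m + 1) * 16) * 16 ^ m := Nat.mul_le_mul_right _ (by nlinarith)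
      _ = (m + 1) ^ 2 * (3 * m + 1) * 16 ^ (m + 1) := by ring

lemma choose_half_sq_mul_le (n : ℕ) : n.choose (n / 2) ^ 2 * (3 * n) ≤ 2 * 4 ^ n := by
  rcases Nat.even_or_odd' n with ⟨m, rfl | rfl⟩
  · rw [Nat.mul_div_cancel_left m two_pos, ← Nat.centralBinom_eq_two_mul_choose]
    calc m.centralBinom ^ 2 * (3 * (2 * m)) ≤ m.centralBinom ^ 2 * (2 * (3 * m + 1)) :=
          Nat.mul_le_mul_left _ (by omega)
      _ = 2 * (m.centralBinom ^ 2 * (3 * m + 1)) := by ring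
      _ ≤ 2 * 16 ^ m := Nat.mul_le_mul_left 2 (centralBinom_sq_mul_le m)
      _ = 2 * 4 ^ (2 * m) := by rw [pow_mul]; rfl
  · have hcb : (m + 1).centralBinom = 2 * (2 * m + 1).choose m := by
      rw [Nat.centralBinom_eq_two_mul_choose, Nat.mul_succ, Nat.choose_succ_succ,
        Nat.choose_symm_half, ← two_mul]
    have h := centralBinom_sq_mul_le (m + 1)
    rw [hcb, mul_pow, mul_assoc, show 16 ^ (m + 1) = 2 ^ 2 * 4 ^ (2 * m + 1) by
      rw [show 16 = 4 ^ 2 from rfl, ← pow_mul]; ring] at h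
    rw [show (2 * m + 1) / 2 = m by omega]
    calc (2 * m + 1).choose m ^ 2 * (3 * (2 * m + 1))
        ≤ (2 * m + 1).choose m ^ 2 * (2 * (3 * (m + 1) + 1)) := Nat.mul_le_mul_left _ (by omega)
      _ = 2 * ((2 * m + 1).choose m ^ 2 * (3 * (m + 1) + 1)) := by ring
      _ ≤ 2 * 4 ^ (2 * m + 1) := Nat.mul_le_mul_left 2 (Nat.le_of_mul_le_mul_left h (by norm_num))

theorem Fin.sum_succ_sub_castSucc {M : Type*} [AddCommGroup M] :
    ∀ {n : ℕ} (f : Fin (n + 1) → M), ∑ i : Fin n, (f i.succ - f i.castSucc) = f (last n) - f 0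
  | 0, f => by simp
  | n + 1, f => by
    rw [Fin.sum_univ_castSucc]
    simp only [Fin.succ_castSucc]
    rw [Fin.sum_succ_sub_castSucc (fun i => f i.castSucc)]
    simp

theorem Fin.eq_of_zero_eq_of_succ_sub_castSucc_eq {M : Type*} [AddCommGroup M] {n : ℕ}
    {v w : Fin (n + 1) → M} (h₀ : v 0 = w 0)
    (h : ∀ i : Fin n, v i.succ - v i.castSucc = w i.succ - w i.castSucc) : v = w := by
  funext i
  induction i using Fin.induction with
  | zero => exact h₀
  | succ i ih => rw [← sub_add_cancel (v i.succ), h i, ih, sub_add_cancel]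

def signSeqs (n : ℕ) (a : ℤ) : Set (Fin n → ℤ) :=
  {ε | (∀ i, ε i = 1 ∨ ε i = -1) ∧ ∑ i, ε i = a}

lemma finite_signSeqs (n : ℕ) (a : ℤ) : (signSeqs n a).Finite :=
  (Set.Finite.pi' fun _ => (Set.toFinite {1, -1})).subset fun _ hε i => hε.1 i

lemma sum_eq_two_mul_card_sub {n : ℕ} {ε : Fin n → ℤ} (h : ∀ i, ε i = 1 ∨ ε i = -1) :
    ∑ i, ε i = 2 * #{i | ε i = 1} - n := by
  have hε : ∀ i, ε i = 2 * (if ε i = 1 then 1 else 0) - 1 := fun i => by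
    rcases h i with h | h <;> simp [h]
  rw [sum_congr rfl fun i _ => hε i, sum_sub_distrib, ← mul_sum]
  simp

lemma ncard_signSeqs_le_choose {n m : ℕ} {a : ℤ} (hm : 2 * (m : ℤ) = n + a) :
    (signSeqs n a).ncard ≤ n.choose m := by
  have hmaps : ∀ ε ∈ signSeqs n a, (univ.filter fun i => ε i = 1) ∈
      ((powersetCard m univ : Finset (Finset (Fin n))) : Set (Finset (Fin n))) := by
    rintro ε ⟨hε, hsum⟩
    have := sum_eq_two_mul_card_sub hε
    rw [mem_coe, mem_powersetCard_univ]
    omega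
  have hinj : Set.InjOn (fun ε : Fin n → ℤ => univ.filter fun i => ε i = 1) (signSeqs n a) := by
    rintro ε ⟨hε, -⟩ δ ⟨hδ, -⟩ heq
    funext i
    have := congrArg (i ∈ ·) heq
    simp only [mem_filter, mem_univ, true_and, eq_iff_iff] at this
    rcases hε i with h | h <;> rcases hδ i with h' | h' <;> simp_all
  simpa using Set.ncard_le_ncard_of_injOn _ hmaps hinj (finite_toSet _)

lemma W_le_ncard_signSeqs_mul (n : ℕ) (x : ℤ × ℤ) :
    W n x ≤ (signSeqs n (x.1 + x.2)).ncard * (signSeqs n (x.1 - x.2)).ncard := by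
  rw [W, ← Set.ncard_prod]
  refine Set.ncard_le_ncard_of_injOn
    (fun v => (fun i => (v i.succ - v i.castSucc).1 + (v i.succ - v i.castSucc).2,
      fun i => (v i.succ - v i.castSucc).1 - (v i.succ - v i.castSucc).2)) ?_ ?_
    ((finite_signSeqs _ _).prod (finite_signSeqs _ _))
  · rintro v ⟨h₀, hlast, hstep⟩
    have hsum := Fin.sum_succ_sub_castSucc v
    rw [h₀, hlast, Prod.mk_zero_zero, sub_zero] at hsum
    have h1 := congrArg Prod.fst hsum
    have h2 := congrArg Prod.snd hsum
    simp only [Prod.fst_sum, Prod.snd_sum] at h1 h2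
    unfold gnorm at hstep
    refine ⟨⟨fun i => ?_, ?_⟩, ⟨fun i => ?_, ?_⟩⟩
    · have := hstep i; dsimp only; omega
    · rw [sum_add_distrib, h1, h2]
    · have := hstep i; dsimp only; omega
    · rw [sum_sub_distrib, h1, h2]
  · rintro v ⟨hv, -, -⟩ w ⟨hw, -, -⟩ heq
    simp only [Prod.mk.injEq, funext_iff] at heq
    refine Fin.eq_of_zero_eq_of_succ_sub_castSucc_eq (hv.trans hw.symm) fun i => ?_
    have h1 := heq.1 i
    have h2 := heq.2 i
    ext <;> omega

lemma ncard_signSeqs_le {n : ℕ} (hn : 0 < n) (a : ℤ) :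
    ((signSeqs n a).ncard : ℝ) ≤ n.choose (n / 2) * exp (1 / 2 - (a : ℝ) ^ 2 / (2 * n)) := by
  rcases (signSeqs n a).eq_empty_or_nonempty with h | ⟨ε, hε, hsum⟩
  · rw [h, Set.ncard_empty, Nat.cast_zero]; positivity
  · set m := #{i | ε i = 1}
    have hm : 2 * (m : ℤ) = n + a := by have := sum_eq_two_mul_card_sub hε; omega
    have ha : (a : ℝ) = 2 * m - n := by rw [eq_sub_iff_add_eq, add_comm]; exact_mod_cast hm.symm
    calc ((signSeqs n a).ncard : ℝ) ≤ n.choose m := by exact_mod_cast ncard_signSeqs_le_choose hm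
      _ ≤ _ := by rw [ha]; exact choose_le_choose_half_mul_exp hn m

lemma gnorm_sq_le (x : ℤ × ℤ) : (gnorm x : ℤ) ^ 2 ≤ (x.1 + x.2) ^ 2 + (x.1 - x.2) ^ 2 := by
  rw [gnorm, Nat.cast_add, Int.natCast_natAbs, Int.natCast_natAbs]
  nlinarith [sq_nonneg (|x.1| - |x.2|), sq_abs x.1, sq_abs x.2]

lemma W_le {n : ℕ} (hn : 0 < n) (x : ℤ × ℤ) :
    (W n x : ℝ) ≤ 2 / 3 * exp 1 * 4 ^ n * (exp (-((gnorm x : ℝ) ^ 2 / 2 / n)) / n) := by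
  set a : ℤ := x.1 + x.2
  set b : ℤ := x.1 - x.2
  have hk : (gnorm x : ℝ) ^ 2 ≤ (a : ℝ) ^ 2 + (b : ℝ) ^ 2 := by exact_mod_cast gnorm_sq_le x
  have hC : (n.choose (n / 2) : ℝ) ^ 2 ≤ 2 * 4 ^ n / (3 * n) := by
    rw [le_div_iff₀ (by positivity)]; exact_mod_cast choose_half_sq_mul_le n
  set C : ℝ := (n.choose (n / 2) : ℝ)
  calc (W n x : ℝ) ≤ (signSeqs n a).ncard * (signSeqs n b).ncard := by
        exact_mod_cast W_le_ncard_signSeqs_mul n x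
    _ ≤ (C * exp (1 / 2 - (a : ℝ) ^ 2 / (2 * n))) * (C * exp (1 / 2 - (b : ℝ) ^ 2 / (2 * n))) := by
        gcongr <;> exact ncard_signSeqs_le hn _
    _ = C ^ 2 * exp (1 - ((a : ℝ) ^ 2 + (b : ℝ) ^ 2) / 2 / n) := by
        rw [mul_mul_mul_comm, ← exp_add, ← sq]; congr 2; ring
    _ ≤ 2 * 4 ^ n / (3 * n) * exp (1 - (gnorm x : ℝ) ^ 2 / 2 / n) := by gcongr
    _ = 2 / 3 * exp 1 * 4 ^ n * (exp (-((gnorm x : ℝ) ^ 2 / 2 / n)) / n) := by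
        rw [sub_eq_add_neg, exp_add]; field_simp

lemma weight_mul_W_le {κ : ℝ} (hκ : 0 ≤ κ) (x : ℤ × ℤ) {n N : ℕ} (hn : 0 < n) (hnN : n ≤ N)
    (hN : (N : ℝ) ≤ (gnorm x : ℝ) ^ 2 / 2) :
    (1 / (4 + κ)) ^ n * (W n x : ℝ) ≤
      2 / 3 * exp 1 * (exp (-((gnorm x : ℝ) ^ 2 / 2 / N)) / N) := by
  have hweight : (1 / (4 + κ)) ^ n * 4 ^ n ≤ 1 := by
    rw [← mul_pow]
    refine pow_le_one₀ (by positivity) ?_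
    rw [one_div_mul_eq_div, div_le_one (by linarith)]
    linarith
  calc (1 / (4 + κ)) ^ n * (W n x : ℝ)
      ≤ (1 / (4 + κ)) ^ n * (2 / 3 * exp 1 * 4 ^ n * (exp (-((gnorm x : ℝ) ^ 2 / 2 / n)) / n)) := by
        gcongr; exact W_le hn x
    _ = ((1 / (4 + κ)) ^ n * 4 ^ n) *
          (2 / 3 * exp 1 * (exp (-((gnorm x : ℝ) ^ 2 / 2 / n)) / n)) := by ring
    _ ≤ 1 * (2 / 3 * exp 1 * (exp (-((gnorm x : ℝ) ^ 2 / 2 / N)) / N)) := by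
        refine mul_le_mul hweight (mul_le_mul_of_nonneg_left ?_ (by positivity)) (by positivity)
          zero_le_one
        exact exp_neg_div_div_le_of_le (Nat.cast_pos.2 hn) (Nat.cast_le.2 hnN) hN
    _ = _ := one_mul _

lemma exp_neg_sq_div_two_div_le_one_div {k N : ℝ} (hk : 0 < k) (hN : 0 < N)
    (hNlog : N * (2 * log k) ≤ k ^ 2) : exp (-(k ^ 2 / 2 / N)) ≤ 1 / k :=
  calc exp (-(k ^ 2 / 2 / N)) ≤ exp (-log k) :=
        exp_le_exp.2 (neg_le_neg (by rw [le_div_iff₀ hN]; linarith))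
    _ = 1 / k := by rw [exp_neg, exp_log hk, one_div]

/-- Lemma 3.6, eq. (3.15): contribution of walks shorter than `|x|²/(2 log |x|)`. -/
theorem stmt10 :
    ∃ M : ℕ, ∀ x : ℤ × ℤ, M ≤ gnorm x → ∀ κ : ℝ, 0 < κ →
      (∑ n ∈ Finset.Icc (gnorm x) ⌊(gnorm x : ℝ) ^ 2 / (2 * Real.log (gnorm x))⌋₊,
        (1 / (4 + κ)) ^ n * (W n x : ℝ))
      ≤ 3 / (gnorm x : ℝ) := by
  refine ⟨3, fun x hx κ hκ => ?_⟩
  set k := gnorm x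
  set N := ⌊(k : ℝ) ^ 2 / (2 * log k)⌋₊
  rcases lt_or_ge N k with hNk | hkN
  · rw [Icc_eq_empty (by omega), sum_empty]; positivity
  have hk : (3 : ℝ) ≤ k := by exact_mod_cast hx
  have hlog : 1 ≤ log k := by
    rw [le_log_iff_exp_le (by positivity)]; linarith [exp_one_lt_d9]
  have hNpos : (0 : ℝ) < N := by exact_mod_cast (by omega : 0 < N)
  have hNlog : (N : ℝ) * (2 * log k) ≤ k ^ 2 :=
    (le_div_iff₀ (by positivity)).1 (Nat.floor_le (by positivity))
  have hN : (N : ℝ) ≤ k ^ 2 / 2 := by rw [le_div_iff₀ two_pos]; nlinarith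
  have hexp := exp_neg_sq_div_two_div_le_one_div (by positivity) hNpos hNlog
  calc ∑ n ∈ Icc k N, (1 / (4 + κ)) ^ n * (W n x : ℝ)
      ≤ ∑ n ∈ Icc k N, 2 / 3 * exp 1 * (exp (-((k : ℝ) ^ 2 / 2 / N)) / N) :=
        sum_le_sum fun n hn =>
          weight_mul_W_le hκ.le x (by have := (mem_Icc.1 hn).1; omega) (mem_Icc.1 hn).2 hN
    _ ≤ N * (2 / 3 * exp 1 * (1 / k / N)) := by
        rw [sum_const, Nat.card_Icc, nsmul_eq_mul]
        gcongr
        exact_mod_cast (by omega : N + 1 - k ≤ N)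
    _ = 2 / 3 * exp 1 / k := by field_simp
    _ ≤ 3 / k := by gcongr; linarith [exp_one_lt_d9]
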